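/- Over the real numbers, the only matrices among the canonical list {[[0,Φ_n],[Φ_nᵀ,0]], ±P_n, ±Q_n(c) with c > 0} that are positive definite are Q_1(c) = diag(c, c) with c > 0; consequently, every positive definite symmetric 2n×2n real matrix A that is symplectically congruent to a block-direct sum of canonical matrices must be symplectically congruent to D ⊕ D with D = diag(α_1,...,α_n), α_i > 0. -/

import Mathlib

open Matrix

/-- The standard symplectic matrix `Ω_n = [[0, I_n], [-I_n, 0]]`. -/
def Omega (n : ℕ) : Matrix (Fin n ⊕ Fin n) (Fin n ⊕ Fin n) ℝ :=
  Matrix.fromBlocks 0 1 (-1) 0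

/-- The canonical symmetric matrix `P_n`. -/
def Pmat (n : ℕ) : Matrix (Fin n ⊕ Fin n) (Fin n ⊕ Fin n) ℝ :=
  Matrix.fromBlocks
    (Matrix.of fun i j => if (i : ℕ) + (j : ℕ) + 1 = n then 1 else 0) 0 0
    (Matrix.of fun i j => if (i : ℕ) + (j : ℕ) = n then 1 else 0)

/-- The canonical symmetric matrix `Q_n(c)` (odd and even `n` cases). -/
def Qmat (n : ℕ) (c : ℝ) : Matrix (Fin n ⊕ Fin n) (Fin n ⊕ Fin n) ℝ :=
  if n % 2 = 1 then
    Matrix.fromBlocks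
      (Matrix.of fun i j => if (i : ℕ) + (j : ℕ) + 1 = n then (-1) ^ (i : ℕ) * c else 0)
      (Matrix.of fun i j => if (i : ℕ) + 1 = (j : ℕ) then 1 else 0)
      (Matrix.of fun i j => if (j : ℕ) + 1 = (i : ℕ) then 1 else 0)
      (Matrix.of fun i j => if (i : ℕ) + (j : ℕ) + 1 = n then (-1) ^ (i : ℕ) * c else 0)
  else
    Matrix.fromBlocks 0
      (Matrix.of fun i j =>
        if (j : ℕ) = (i : ℕ) + 2 then 1
        else if (i : ℕ) % 2 = 0 ∧ (j : ℕ) = (i : ℕ) + 1 then 1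
        else if (i : ℕ) % 2 = 1 ∧ (j : ℕ) + 1 = (i : ℕ) then -c ^ 2 else 0)
      (Matrix.of fun i j =>
        if (i : ℕ) = (j : ℕ) + 2 then 1
        else if (j : ℕ) % 2 = 0 ∧ (i : ℕ) = (j : ℕ) + 1 then 1
        else if (j : ℕ) % 2 = 1 ∧ (i : ℕ) + 1 = (j : ℕ) then -c ^ 2 else 0)
      (Matrix.of fun i j => if (i : ℕ) = (j : ℕ) ∧ (i : ℕ) < 2 then 1 else 0)

/-- `A` and `B` are symplectically congruent. -/
def SympCongruent {n : ℕ}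
    (A B : Matrix (Fin n ⊕ Fin n) (Fin n ⊕ Fin n) ℝ) : Prop :=
  ∃ S, Sᵀ * Omega n * S = Omega n ∧ B = Sᵀ * A * S

/-- Reindexing equivalence used to define the interleaving block-direct sum. -/
def glue (p q : ℕ) : (Fin (p + q) ⊕ Fin (p + q)) ≃ ((Fin p ⊕ Fin p) ⊕ (Fin q ⊕ Fin q)) :=
  (Equiv.sumCongr finSumFinEquiv.symm finSumFinEquiv.symm).trans
    (Equiv.sumSumSumComm (Fin p) (Fin q) (Fin p) (Fin q))

/-- The block-direct sum `M ⊞ N` that interleaves the four blocks. -/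
def boxSum {p q : ℕ} (M : Matrix (Fin p ⊕ Fin p) (Fin p ⊕ Fin p) ℝ)
    (N : Matrix (Fin q ⊕ Fin q) (Fin q ⊕ Fin q) ℝ) :
    Matrix (Fin (p + q) ⊕ Fin (p + q)) (Fin (p + q) ⊕ Fin (p + q)) ℝ :=
  (Matrix.fromBlocks M 0 0 N).submatrix (glue p q) (glue p q)

/-- Total size of a list of canonical blocks. -/
def sumSize : List (Σ k : ℕ, Matrix (Fin k ⊕ Fin k) (Fin k ⊕ Fin k) ℝ) → ℕ
  | [] => 0
  | ⟨k, _⟩ :: l => k + sumSize l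

/-- Block-direct sum of a list of blocks. -/
def blockSumList :
    (l : List (Σ k : ℕ, Matrix (Fin k ⊕ Fin k) (Fin k ⊕ Fin k) ℝ)) →
      Matrix (Fin (sumSize l) ⊕ Fin (sumSize l)) (Fin (sumSize l) ⊕ Fin (sumSize l)) ℝ
  | [] => 0
  | ⟨_, M⟩ :: l => boxSum M (blockSumList l)

/-- Membership in the canonical list of the paper. -/
def IsCanonical (b : Σ k : ℕ, Matrix (Fin k ⊕ Fin k) (Fin k ⊕ Fin k) ℝ) : Prop :=
  (∃ Φ : Matrix (Fin b.1) (Fin b.1) ℝ, b.2 = Matrix.fromBlocks 0 Φ Φᵀ 0) ∨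
    b.2 = Pmat b.1 ∨ b.2 = -Pmat b.1 ∨
    ∃ c : ℝ, 0 < c ∧ (b.2 = Qmat b.1 c ∨ b.2 = -Qmat b.1 c)


/-! A positive definite matrix has positive diagonal entries, and every canonical block except
`Q_1(c) = diag(c, c)` has a diagonal entry equal to `0` or `-c`. A symplectic matrix is invertible
since `det Ω ≠ 0`, so symplectic congruence preserves positive definiteness. The blocks of a
positive definite block sum are principal submatrices, hence positive definite, hence all of the
form `Q_1(c)`, and a block sum of such blocks is `D ⊕ D` with `D` positive diagonal. -/

lemma Omega_mul_self (n : ℕ) : Omega n * Omega n = -1 := by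
  simp [Omega, fromBlocks_multiply, ← fromBlocks_one, fromBlocks_neg]

lemma isUnit_det_Omega (n : ℕ) : IsUnit (Omega n).det :=
  isUnit_det_of_right_inverse (B := -Omega n) (by rw [mul_neg, Omega_mul_self, neg_neg])

lemma isUnit_det_of_transpose_mul_mul_eq {ι R : Type*} [Fintype ι] [DecidableEq ι] [CommRing R]
    {Ω S : Matrix ι ι R} (hΩ : IsUnit Ω.det) (h : Sᵀ * Ω * S = Ω) : IsUnit S.det := by
  rw [← h, det_mul, det_mul, det_transpose] at hΩ
  exact isUnit_of_mul_isUnit_right hΩ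

lemma SympCongruent.posDef {n : ℕ} {A B : Matrix (Fin n ⊕ Fin n) (Fin n ⊕ Fin n) ℝ}
    (h : SympCongruent A B) (hA : A.PosDef) : B.PosDef := by
  obtain ⟨S, hS, rfl⟩ := h
  have hSu : IsUnit S :=
    (isUnit_iff_isUnit_det S).2 (isUnit_det_of_transpose_mul_mul_eq (isUnit_det_Omega n) hS)
  simpa using hA.conjTranspose_mul_mul_same (mulVec_injective_of_isUnit hSu)

lemma not_posDef_of_diag_nonpos {ι : Type*} [Fintype ι] {M : Matrix ι ι ℝ} {i : ι}
    (h : M i i ≤ 0) : ¬ M.PosDef :=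
  fun hM => h.not_gt hM.diag_pos

lemma not_posDef_fromBlocks_zero {m ι : Type*} [Fintype m] [Fintype ι] [Nonempty m]
    (B : Matrix m ι ℝ) (C : Matrix ι m ℝ) (D : Matrix ι ι ℝ) : ¬ (fromBlocks 0 B C D).PosDef :=
  not_posDef_of_diag_nonpos (i := Sum.inl (Classical.arbitrary m)) (by simp)

lemma Pmat_inr_inr_zero {k : ℕ} (hk : 0 < k) :
    Pmat k (Sum.inr ⟨0, hk⟩) (Sum.inr ⟨0, hk⟩) = 0 := by
  simp [Pmat, hk.ne]

lemma not_posDef_Pmat {k : ℕ} (hk : 0 < k) : ¬ (Pmat k).PosDef :=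
  not_posDef_of_diag_nonpos (Pmat_inr_inr_zero hk).le

lemma not_posDef_neg_Pmat {k : ℕ} (hk : 0 < k) : ¬ (-Pmat k).PosDef :=
  not_posDef_of_diag_nonpos (i := Sum.inr ⟨0, hk⟩) (by simp [Pmat_inr_inr_zero hk])

lemma Qmat_inl_inl_zero {k : ℕ} (hk : 0 < k) (hk1 : k ≠ 1) (c : ℝ) :
    Qmat k c (Sum.inl ⟨0, hk⟩) (Sum.inl ⟨0, hk⟩) = 0 := by
  by_cases hpar : k % 2 = 1 <;> simp [Qmat, hpar, Ne.symm hk1]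

lemma Qmat_one (c : ℝ) :
    Qmat 1 c = fromBlocks (diagonal fun _ => c) 0 0 (diagonal fun _ => c) := by
  ext (i | i) (j | j) <;> fin_cases i <;> fin_cases j <;> simp [Qmat]

lemma posDef_Qmat_iff {k : ℕ} (hk : 0 < k) {c : ℝ} (hc : 0 < c) :
    (Qmat k c).PosDef ↔ k = 1 := by
  refine ⟨fun h => by_contra fun hk1 =>
    not_posDef_of_diag_nonpos (Qmat_inl_inl_zero hk hk1 c).le h, ?_⟩
  rintro rfl
  rw [Qmat_one, fromBlocks_diagonal]
  exact PosDef.diagonal fun i => by cases i <;> exact hc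

lemma not_posDef_neg_Qmat {k : ℕ} (hk : 0 < k) {c : ℝ} (hc : 0 < c) : ¬ (-Qmat k c).PosDef := by
  obtain rfl | hk1 := eq_or_ne k 1
  · exact not_posDef_of_diag_nonpos (i := Sum.inl 0) (by simp [Qmat_one, hc.le])
  · exact not_posDef_of_diag_nonpos (i := Sum.inl ⟨0, hk⟩) (by simp [Qmat_inl_inl_zero hk hk1])

def IsPosDoubleDiagonal {n : ℕ} (M : Matrix (Fin n ⊕ Fin n) (Fin n ⊕ Fin n) ℝ) : Prop :=
  ∃ α : Fin n → ℝ, (∀ i, 0 < α i) ∧ M = fromBlocks (diagonal α) 0 0 (diagonal α)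

lemma IsPosDoubleDiagonal.of_fin_zero (M : Matrix (Fin 0 ⊕ Fin 0) (Fin 0 ⊕ Fin 0) ℝ) :
    IsPosDoubleDiagonal M :=
  ⟨finZeroElim, finZeroElim, Subsingleton.elim _ _⟩

lemma IsCanonical.isPosDoubleDiagonal {k : ℕ} {M : Matrix (Fin k ⊕ Fin k) (Fin k ⊕ Fin k) ℝ}
    (hM : IsCanonical ⟨k, M⟩) (hpd : M.PosDef) : IsPosDoubleDiagonal M := by
  obtain rfl | hk := Nat.eq_zero_or_pos k
  · exact .of_fin_zero M
  have := Fin.pos_iff_nonempty.1 hk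
  rcases hM with ⟨Φ, h⟩ | h | h | ⟨c, hc, h | h⟩ <;> dsimp only at h <;> rw [h] at hpd ⊢
  · exact absurd hpd (not_posDef_fromBlocks_zero _ _ _)
  · exact absurd hpd (not_posDef_Pmat hk)
  · exact absurd hpd (not_posDef_neg_Pmat hk)
  · obtain rfl := (posDef_Qmat_iff hk hc).1 hpd
    exact ⟨fun _ => c, fun _ => hc, Qmat_one c⟩
  · exact absurd hpd (not_posDef_neg_Qmat hk hc)

section BoxSum

variable {p q : ℕ} {M : Matrix (Fin p ⊕ Fin p) (Fin p ⊕ Fin p) ℝ}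
  {N : Matrix (Fin q ⊕ Fin q) (Fin q ⊕ Fin q) ℝ}

lemma boxSum_submatrix_inl :
    (boxSum M N).submatrix ((glue p q).symm ∘ Sum.inl) ((glue p q).symm ∘ Sum.inl) = M := by
  ext i j; simp [boxSum]

lemma boxSum_submatrix_inr :
    (boxSum M N).submatrix ((glue p q).symm ∘ Sum.inr) ((glue p q).symm ∘ Sum.inr) = N := by
  ext i j; simp [boxSum]

lemma PosDef.of_boxSum (h : (boxSum M N).PosDef) : M.PosDef ∧ N.PosDef :=
  ⟨by simpa only [boxSum_submatrix_inl] using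
      h.submatrix ((glue p q).symm.injective.comp Sum.inl_injective),
    by simpa only [boxSum_submatrix_inr] using
      h.submatrix ((glue p q).symm.injective.comp Sum.inr_injective)⟩

lemma boxSum_diagonal (d : Fin p ⊕ Fin p → ℝ) (e : Fin q ⊕ Fin q → ℝ) :
    boxSum (diagonal d) (diagonal e) = diagonal (Sum.elim d e ∘ glue p q) := by
  rw [boxSum, fromBlocks_diagonal, submatrix_diagonal_equiv]

lemma IsPosDoubleDiagonal.boxSum (hM : IsPosDoubleDiagonal M) (hN : IsPosDoubleDiagonal N) :
    IsPosDoubleDiagonal (boxSum M N) := by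
  obtain ⟨a, ha, rfl⟩ := hM
  obtain ⟨b, hb, rfl⟩ := hN
  refine ⟨Sum.elim a b ∘ finSumFinEquiv.symm, fun i => ?_, ?_⟩
  · exact (Sum.forall.2 ⟨ha, hb⟩ : ∀ x, 0 < Sum.elim a b x) _
  · simp only [fromBlocks_diagonal, boxSum_diagonal]
    congr 1
    funext i
    rcases i with i | i <;> cases h : finSumFinEquiv.symm i <;> simp [glue, h]

end BoxSum

lemma isPosDoubleDiagonal_blockSumList :
    ∀ {l : List (Σ k : ℕ, Matrix (Fin k ⊕ Fin k) (Fin k ⊕ Fin k) ℝ)},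
      (∀ b ∈ l, IsCanonical b) → (blockSumList l).PosDef → IsPosDoubleDiagonal (blockSumList l)
  | [], _, _ => .of_fin_zero _
  | ⟨_, M⟩ :: l, hcan, hpd => by
    obtain ⟨hM, hl⟩ := PosDef.of_boxSum hpd
    exact (IsCanonical.isPosDoubleDiagonal (hcan _ List.mem_cons_self) hM).boxSum
      (isPosDoubleDiagonal_blockSumList (fun b hb => hcan b (List.mem_cons_of_mem _ hb)) hl)

/-- Among the canonical matrices only `Q_1(c) = diag(c, c)` with `c > 0` is
positive definite; consequently every positive definite symmetric matrix that is
symplectically congruent to a block-direct sum of canonical matrices is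
symplectically congruent to `D ⊕ D` with `D` diagonal with positive entries. -/
theorem stmt16 :
    (∀ (k : ℕ) (M : Matrix (Fin k) (Fin k) ℝ), 0 < k →
      ¬ (Matrix.fromBlocks 0 M Mᵀ 0).PosDef) ∧
    (∀ k : ℕ, 0 < k → ¬ (Pmat k).PosDef ∧ ¬ (-Pmat k).PosDef) ∧
    (∀ (k : ℕ) (c : ℝ), 0 < k → 0 < c →
      (((Qmat k c).PosDef ↔ k = 1) ∧ ¬ (-Qmat k c).PosDef)) ∧
    (∀ (n : ℕ) (A : Matrix (Fin n ⊕ Fin n) (Fin n ⊕ Fin n) ℝ), A.PosDef →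
      (∃ (l : List (Σ k : ℕ, Matrix (Fin k ⊕ Fin k) (Fin k ⊕ Fin k) ℝ))
          (h : sumSize l = n), (∀ b ∈ l, IsCanonical b) ∧
          SympCongruent A
            (cast (congrArg (fun k => Matrix (Fin k ⊕ Fin k) (Fin k ⊕ Fin k) ℝ) h)
              (blockSumList l))) →
      ∃ α : Fin n → ℝ, (∀ i, 0 < α i) ∧
        SympCongruent A
          (Matrix.fromBlocks (Matrix.diagonal α) 0 0 (Matrix.diagonal α))) := by
  refine ⟨fun k M hk => ?_, fun k hk => ⟨not_posDef_Pmat hk, not_posDef_neg_Pmat hk⟩,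
    fun k c hk hc => ⟨posDef_Qmat_iff hk hc, not_posDef_neg_Qmat hk hc⟩, ?_⟩
  · have := Fin.pos_iff_nonempty.1 hk
    exact not_posDef_fromBlocks_zero M Mᵀ 0
  rintro n A hA ⟨l, rfl, hcan, hAl⟩
  obtain ⟨α, hα, hl⟩ := isPosDoubleDiagonal_blockSumList hcan (hAl.posDef hA)
  exact ⟨α, hα, hl ▸ hAl⟩
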